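/- Let g be an admissible free holomorphic function whose associated weighted left creation tuple W on F²(H_n) satisfies: ∑_{k,|α|=k} a_α W_α W_α* converges in operator norm (where g^{-1} = 1 + ∑ a_α Z_α). Let π be a unital *-representation of C*(W) on a Hilbert space K that is NOT of Cuntz type, i.e., Δ := ∑ a_α π(W_α)π(W_α)* ≠ 0. Then π is isometric: ‖π(x)‖ = ‖x‖ for every x ∈ C*(W), so C*(W) and C*(π(W_1),…,π(W_n)) are *-isomorphic. -/

import Mathlib

/-!
The inversion relation between `a` and `b` makes `∑ a_α W_α W_α*` telescope on each basis vector: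
`W_α W_α*` multiplies `e_γ` by `b_{γ'} / b_γ` when `γ = αγ'` and kills it otherwise, so the limit
`Δ` is the projection onto the vacuum `e_∅`. Hence `Δ x Δ = ⟨e_∅, x e_∅⟩ Δ` for every operator
`x`. If `π z = 0`, compressing `(z w)* (z w)` by `Δ` gives `‖z w e_∅‖² π(Δ) = 0`, so `z` kills
every `W_β e_∅`, a nonzero multiple of `e_β`; thus `z = 0`. An injective *-homomorphism of
C*-algebras is isometric.
-/

open scoped ENNReal Topology

noncomputable section

/-- Words over the alphabet `Fin n`: elements of the free monoid `F_n^+`. -/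
abbrev Word (n : ℕ) := List (Fin n)

/-- The full Fock space `F²(H_n)`, with orthonormal basis indexed by words. -/
abbrev Fock (n : ℕ) := lp (fun _ : Word n => ℂ) 2

/-- The basis vector `e_α` of the full Fock space. -/
def fockE {n : ℕ} (α : Word n) : Fock n := lp.single 2 α 1

/-- The operator `W_β = W_{i₁} ⋯ W_{i_k}` for a word `β = g_{i₁}⋯g_{i_k}`. -/
def Wword {n : ℕ} (W : Fin n → (Fock n →L[ℂ] Fock n)) (β : Word n) :
    Fock n →L[ℂ] Fock n := (β.map W).prod

/-- The partial sums `∑_{p=0}^{N} ∑_{|α|=p} a_α W_α W_α*`. -/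
def partialSumOp {n : ℕ} (a : Word n → ℝ) (W : Fin n → (Fock n →L[ℂ] Fock n)) (N : ℕ) :
    Fock n →L[ℂ] Fock n :=
  ∑ p ∈ Finset.range (N + 1), ∑ f : Fin p → Fin n,
    (a (List.ofFn f) : ℂ) •
      (Wword W (List.ofFn f) * ContinuousLinearMap.adjoint (Wword W (List.ofFn f)))

/-- The C*-algebra `C*(W)` generated by `W₁,…,W_n` and the identity, as a closed star
subalgebra of `B(F²(H_n))`. -/
def CstarW {n : ℕ} (W : Fin n → (Fock n →L[ℂ] Fock n)) :
    StarSubalgebra ℂ (Fock n →L[ℂ] Fock n) :=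
  (StarAlgebra.adjoin ℂ (Set.range W)).topologicalClosure

open scoped InnerProductSpace

section Fock

variable {n : ℕ}

lemma inner_fockE_left (α : Word n) (y : Fock n) : ⟪fockE α, y⟫_ℂ = y α := by
  classical
  simp [fockE, lp.inner_single_left]

lemma inner_fockE_fockE (α β : Word n) :
    ⟪fockE α, fockE β⟫_ℂ = if α = β then 1 else 0 := by
  classical
  rw [inner_fockE_left, fockE, lp.single_apply, Pi.single_apply]

lemma Fock.ext_inner_fockE {u v : Fock n} (h : ∀ δ, ⟪fockE δ, u⟫_ℂ = ⟪fockE δ, v⟫_ℂ) :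
    u = v :=
  lp.ext <| funext fun δ => by simpa only [inner_fockE_left] using h δ

lemma Fock.clm_ext {E : Type*} [NormedAddCommGroup E] [NormedSpace ℂ E]
    {T S : Fock n →L[ℂ] E} (h : ∀ γ, T (fockE γ) = S (fockE γ)) : T = S :=
  lp.ext_continuousLinearMap ENNReal.ofNat_ne_top fun γ => by
    ext
    exact h γ

end Fock

section WeightedShift

variable {n : ℕ} {b : Word n → ℝ} {W : Fin n → (Fock n →L[ℂ] Fock n)}

lemma Wword_cons (i : Fin n) (β : Word n) : Wword W (i :: β) = W i * Wword W β := by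
  simp [Wword]

variable (hbpos : ∀ α, 0 < b α)
  (hW : ∀ (i : Fin n) (α : Word n), W i (fockE α) =
    (Real.sqrt (b α / b (i :: α)) : ℂ) • fockE (i :: α))
include hbpos hW

lemma Wword_apply_fockE (β γ : Word n) :
    Wword W β (fockE γ) = (Real.sqrt (b γ / b (β ++ γ)) : ℂ) • fockE (β ++ γ) := by
  induction β with
  | nil => simp [Wword, div_self (hbpos γ).ne']
  | cons i β ih =>
    have hratio : b γ / b (β ++ γ) * (b (β ++ γ) / b (i :: (β ++ γ))) =
        b γ / b (i :: (β ++ γ)) := by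
      field_simp [(hbpos (β ++ γ)).ne']
    rw [Wword_cons, mul_apply_eq_comp, ih, map_smul, hW, smul_smul,
      ← Complex.ofReal_mul, ← Real.sqrt_mul (div_nonneg (hbpos _).le (hbpos _).le), hratio,
      List.cons_append]

lemma adjoint_Wword_apply_fockE_append (β δ : Word n) :
    (Wword W β).adjoint (fockE (β ++ δ)) = (Real.sqrt (b δ / b (β ++ δ)) : ℂ) • fockE δ := by
  refine Fock.ext_inner_fockE fun δ' => ?_
  rw [ContinuousLinearMap.adjoint_inner_right, Wword_apply_fockE hbpos hW, inner_smul_left,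
    inner_smul_right, inner_fockE_fockE, inner_fockE_fockE, Complex.conj_ofReal]
  simp only [List.append_cancel_left_eq]
  split_ifs with h <;> simp [h]

lemma adjoint_Wword_apply_fockE_of_not_prefix {β γ : Word n} (h : ¬ β <+: γ) :
    (Wword W β).adjoint (fockE γ) = 0 := by
  refine Fock.ext_inner_fockE fun δ => ?_
  have hne : γ ≠ β ++ δ := fun hγ => h ⟨δ, hγ.symm⟩
  rw [ContinuousLinearMap.adjoint_inner_right, Wword_apply_fockE hbpos hW, inner_smul_left,
    inner_fockE_fockE, if_neg hne.symm, mul_zero, inner_zero_right]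

lemma Wword_mul_adjoint_apply_fockE (β γ : Word n) :
    (Wword W β * (Wword W β).adjoint) (fockE γ) =
      if β <+: γ then ((b (γ.drop β.length) / b γ : ℝ) : ℂ) • fockE γ else 0 := by
  split_ifs with h
  · obtain ⟨δ, rfl⟩ := h
    rw [mul_apply_eq_comp, adjoint_Wword_apply_fockE_append hbpos hW, map_smul,
      Wword_apply_fockE hbpos hW, smul_smul, ← Complex.ofReal_mul,
      Real.mul_self_sqrt (div_nonneg (hbpos _).le (hbpos _).le), List.drop_left]
  · rw [mul_apply_eq_comp, adjoint_Wword_apply_fockE_of_not_prefix hbpos hW h,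
      map_zero]

end WeightedShift

lemma List.exists_ofFn_eq_take {α : Type*} {γ : List α} {p : ℕ} (h : p ≤ γ.length) :
    ∃ f : Fin p → α, List.ofFn f = γ.take p :=
  ⟨fun j => γ[j], List.ext_getElem (by simp [h]) (by simp)⟩

section PartialSums

variable {n : ℕ} {a b : Word n → ℝ} {W : Fin n → (Fock n →L[ℂ] Fock n)}

lemma sum_take_mul_drop_eq (ha0 : a [] = 1)
    (hinv : ∀ γ : Word n, γ ≠ [] →
      b γ + ∑ k ∈ Finset.Icc 1 γ.length, a (γ.take k) * b (γ.drop k) = 0) (γ : Word n) :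
    ∑ p ∈ Finset.range (γ.length + 1), a (γ.take p) * b (γ.drop p) =
      if γ = [] then b [] else 0 := by
  split_ifs with hγ
  · simp [hγ, ha0]
  · rw [← hinv γ hγ, Finset.range_eq_Ico, Finset.sum_eq_sum_Ico_succ_bot (Nat.succ_pos _),
      List.take_zero, List.drop_zero, ha0, one_mul]
    rfl

variable (hbpos : ∀ α, 0 < b α)
  (hW : ∀ (i : Fin n) (α : Word n), W i (fockE α) =
    (Real.sqrt (b α / b (i :: α)) : ℂ) • fockE (i :: α))
include hbpos hW

lemma sum_level_apply_fockE (p : ℕ) (γ : Word n) :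
    (∑ f : Fin p → Fin n, (a (List.ofFn f) : ℂ) •
      (Wword W (List.ofFn f) * (Wword W (List.ofFn f)).adjoint)) (fockE γ) =
    if p ≤ γ.length then ((a (γ.take p) * (b (γ.drop p) / b γ) : ℝ) : ℂ) • fockE γ else 0 := by
  classical
  simp only [sum_apply, smul_apply, Wword_mul_adjoint_apply_fockE hbpos hW, List.length_ofFn,
    List.prefix_iff_eq_take, smul_ite, smul_zero]
  split_ifs with hp
  · obtain ⟨f₀, hf₀⟩ := List.exists_ofFn_eq_take hp
    simp only [← hf₀, List.ofFn_inj, Finset.sum_ite_eq', Finset.mem_univ, if_true, smul_smul,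
      Complex.ofReal_mul]
  · refine Finset.sum_eq_zero fun f _ => if_neg fun hf => hp ?_
    simpa using congrArg List.length hf

lemma partialSumOp_apply_fockE (ha0 : a [] = 1)
    (hinv : ∀ γ : Word n, γ ≠ [] →
      b γ + ∑ k ∈ Finset.Icc 1 γ.length, a (γ.take k) * b (γ.drop k) = 0)
    {γ : Word n} {N : ℕ} (hN : γ.length ≤ N) :
    partialSumOp a W N (fockE γ) = if γ = [] then fockE [] else 0 := by
  have hrange :
      (Finset.range (N + 1)).filter (· ≤ γ.length) = Finset.range (γ.length + 1) := by
    ext p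
    simp only [Finset.mem_filter, Finset.mem_range]
    omega
  rw [partialSumOp, sum_apply]
  simp only [sum_level_apply_fockE hbpos hW]
  rw [← Finset.sum_filter, hrange, ← Finset.sum_smul, ← Complex.ofReal_sum]
  simp only [← mul_div_assoc, ← Finset.sum_div, sum_take_mul_drop_eq ha0 hinv]
  split_ifs with hγ
  · rw [hγ, div_self (hbpos []).ne', Complex.ofReal_one, one_smul]
  · rw [zero_div, Complex.ofReal_zero, zero_smul]

lemma apply_eq_inner_vacuum_smul_of_tendsto (ha0 : a [] = 1)
    (hinv : ∀ γ : Word n, γ ≠ [] →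
      b γ + ∑ k ∈ Finset.Icc 1 γ.length, a (γ.take k) * b (γ.drop k) = 0)
    {Δ : Fock n →L[ℂ] Fock n}
    (hconv : Filter.Tendsto (fun N : ℕ => partialSumOp a W N) Filter.atTop (𝓝 Δ))
    (y : Fock n) : Δ y = ⟪fockE [], y⟫_ℂ • fockE [] := by
  suffices Δ = (innerSL ℂ (fockE ([] : Word n))).smulRight (fockE []) by rw [this]; rfl
  have happly (γ : Word n) := (ContinuousLinearMap.apply ℂ _ (fockE γ)).continuous.tendsto Δ
  refine Fock.clm_ext fun γ => tendsto_nhds_unique ((happly γ).comp hconv) ?_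
  rw [ContinuousLinearMap.smulRight_apply, innerSL_apply_apply, inner_fockE_fockE]
  refine tendsto_const_nhds.congr' (Filter.eventually_atTop.2 ⟨γ.length, fun N hN => ?_⟩)
  rw [Function.comp_apply, ContinuousLinearMap.apply_apply,
    partialSumOp_apply_fockE hbpos hW ha0 hinv hN]
  by_cases hγ : γ = [] <;> simp [hγ, eq_comm]

end PartialSums

lemma mul_mul_eq_inner_smul_of_apply_eq_inner_smul {𝕜 E : Type*} [RCLike 𝕜]
    [SeminormedAddCommGroup E] [InnerProductSpace 𝕜 E] {P : E →L[𝕜] E} {e : E}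
    (hP : ∀ y, P y = ⟪e, y⟫_𝕜 • e) (T : E →L[𝕜] E) :
    P * T * P = ⟪e, T e⟫_𝕜 • P := by
  ext y
  simp only [mul_apply_eq_comp, smul_apply, hP, map_smul, smul_smul, mul_comm]

lemma StarSubalgebra.injective_of_map_ne_zero_of_apply_eq_inner_smul {H B : Type*}
    [NormedAddCommGroup H] [InnerProductSpace ℂ H] [CompleteSpace H]
    [Ring B] [Algebra ℂ B] [NoZeroSMulDivisors ℂ B]
    (A : StarSubalgebra ℂ (H →L[ℂ] H)) {e : H} {P : A}
    (hP : ∀ y, (P : H →L[ℂ] H) y = ⟪e, y⟫_ℂ • e)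
    (hcyclic : ∀ z : A, (∀ w : A, (z : H →L[ℂ] H) ((w : H →L[ℂ] H) e) = 0) → z = 0)
    (π : A →ₐ[ℂ] B) (hπP : π P ≠ 0) : Function.Injective π := by
  refine (injective_iff_map_eq_zero π).2 fun z hz => hcyclic z fun w => ?_
  set x : A := star (z * w) * (z * w)
  have hcompress : P * x * P = ⟪e, (x : H →L[ℂ] H) e⟫_ℂ • P :=
    Subtype.ext (mul_mul_eq_inner_smul_of_apply_eq_inner_smul hP _)
  have hπx : π x = 0 := by simp only [x, map_mul, hz, zero_mul, mul_zero]
  have hx : ⟪e, (x : H →L[ℂ] H) e⟫_ℂ = 0 := by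
    have := congrArg π hcompress
    rwa [map_mul, map_mul, hπx, mul_zero, zero_mul, map_smul, eq_comm, smul_eq_zero,
      or_iff_left hπP] at this
  have hxe : ⟪e, (x : H →L[ℂ] H) e⟫_ℂ =
      ⟪(z * w : H →L[ℂ] H) e, (z * w : H →L[ℂ] H) e⟫_ℂ := by
    rw [← ContinuousLinearMap.adjoint_inner_right]
    rfl
  rw [hxe, inner_self_eq_zero] at hx
  exact hx

lemma Wword_mem_CstarW {n : ℕ} (W : Fin n → (Fock n →L[ℂ] Fock n)) (β : Word n) :
    Wword W β ∈ CstarW W := by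
  induction β with
  | nil => exact one_mem _
  | cons i β ih =>
    rw [Wword_cons]
    exact mul_mem (StarSubalgebra.le_topologicalClosure _
      (StarAlgebra.subset_adjoin ℂ _ ⟨i, rfl⟩)) ih

lemma CstarW.eq_zero_of_forall_apply_vacuum {n : ℕ} {b : Word n → ℝ}
    {W : Fin n → (Fock n →L[ℂ] Fock n)} (hbpos : ∀ α, 0 < b α)
    (hW : ∀ (i : Fin n) (α : Word n), W i (fockE α) =
      (Real.sqrt (b α / b (i :: α)) : ℂ) • fockE (i :: α))
    (z : CstarW W)
    (hz : ∀ w : CstarW W, (z : Fock n →L[ℂ] Fock n) ((w : Fock n →L[ℂ] Fock n) (fockE [])) = 0) :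
    z = 0 := by
  refine Subtype.ext (Fock.clm_ext fun β => ?_)
  have h := hz ⟨Wword W β, Wword_mem_CstarW W β⟩
  have hc : (Real.sqrt (b [] / b β) : ℂ) ≠ 0 := by
    exact_mod_cast (Real.sqrt_pos.2 (div_pos (hbpos _) (hbpos _))).ne'
  rw [Wword_apply_fockE hbpos hW, List.append_nil, map_smul, smul_eq_zero, or_iff_right hc] at h
  rw [h]
  rfl

theorem stmt19_general {n : ℕ} {K : Type} [NormedAddCommGroup K] [InnerProductSpace ℂ K]
    [CompleteSpace K]
    (a b : Word n → ℝ) (hbpos : ∀ α, 0 < b α) (ha0 : a [] = 1)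
    (hinv : ∀ γ : Word n, γ ≠ [] →
      b γ + ∑ k ∈ Finset.Icc 1 γ.length, a (γ.take k) * b (γ.drop k) = 0)
    (W : Fin n → (Fock n →L[ℂ] Fock n))
    (hW : ∀ (i : Fin n) (α : Word n), W i (fockE α) =
      (Real.sqrt (b α / b (i :: α)) : ℂ) • fockE (i :: α))
    (Δ : Fock n →L[ℂ] Fock n)
    (hconv : Filter.Tendsto (fun N : ℕ => partialSumOp a W N) Filter.atTop (𝓝 Δ))
    (hΔmem : Δ ∈ CstarW W)
    (π : (CstarW W) →⋆ₐ[ℂ] (K →L[ℂ] K))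
    (hnotCuntz : π ⟨Δ, hΔmem⟩ ≠ 0) :
    ∀ x : CstarW W, ‖π x‖ = ‖(x : Fock n →L[ℂ] Fock n)‖ := by
  have : IsClosed (CstarW W : Set (Fock n →L[ℂ] Fock n)) :=
    StarSubalgebra.isClosed_topologicalClosure _
  have hinj : Function.Injective π :=
    (CstarW W).injective_of_map_ne_zero_of_apply_eq_inner_smul
      (apply_eq_inner_vacuum_smul_of_tendsto hbpos hW ha0 hinv hconv)
      (CstarW.eq_zero_of_forall_apply_vacuum hbpos hW) π.toAlgHom hnotCuntz
  exact NonUnitalStarAlgHom.norm_map π hinj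

/-- let `g` be an admissible free holomorphic function (positive coefficients
`b` with `b_{g₀}=1`, `sup_α b_α/b_{g_iα} < ∞`, and a geometric growth bound on the level
sums `∑_{|α|=k} b_α²`) whose inverse has coefficients `a`, and suppose the series
`∑ a_α W_α W_α*` converges in operator norm to `Δ ∈ C*(W)`.  If `π` is a unital
*-representation of `C*(W)` on a Hilbert space `K` that is not of Cuntz type, i.e.
`π(Δ) ≠ 0`, then `π` is isometric: `‖π(x)‖ = ‖x‖` for all `x ∈ C*(W)`; in particular
`C*(W)` and `C*(π(W₁),…,π(W_n))` are *-isomorphic. -/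
theorem stmt19 {n : ℕ} {K : Type} [NormedAddCommGroup K] [InnerProductSpace ℂ K]
    [CompleteSpace K]
    (a b : Word n → ℝ) (hbpos : ∀ α, 0 < b α) (hb0 : b [] = 1) (ha0 : a [] = 1)
    (hsup : ∀ i : Fin n, ∃ C : ℝ, ∀ α, b α / b (i :: α) ≤ C)
    (hgrowth : ∃ C : ℝ, 0 < C ∧ ∀ k : ℕ,
      (∑ f : Fin k → Fin n, (b (List.ofFn f)) ^ 2) ≤ C ^ (2 * k))
    (hinv : ∀ γ : Word n, γ ≠ [] →
      b γ + ∑ k ∈ Finset.Icc 1 γ.length, a (γ.take k) * b (γ.drop k) = 0)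
    (W : Fin n → (Fock n →L[ℂ] Fock n))
    (hW : ∀ (i : Fin n) (α : Word n), W i (fockE α) =
      (Real.sqrt (b α / b (i :: α)) : ℂ) • fockE (i :: α))
    (Δ : Fock n →L[ℂ] Fock n)
    (hconv : Filter.Tendsto (fun N : ℕ => partialSumOp a W N) Filter.atTop (𝓝 Δ))
    (hΔmem : Δ ∈ CstarW W)
    (π : (CstarW W) →⋆ₐ[ℂ] (K →L[ℂ] K))
    (hnotCuntz : π ⟨Δ, hΔmem⟩ ≠ 0) :
    ∀ x : CstarW W, ‖π x‖ = ‖(x : Fock n →L[ℂ] Fock n)‖ :=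
  stmt19_general a b hbpos ha0 hinv W hW Δ hconv hΔmem π hnotCuntz
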